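/- The average of maximum-concurrent-flow objectives over any finite set of demand matrices is quasi-concave in the flow vector: for any M ≥ 1 and demand vectors D¹, …, D^M : U → ℝ with D^i u ≥ 0 for all i and u, the function g(x) = (1/M) · Σ_{i=1}^M f_MCONC(x, D^i) satisfies g(λ·x + (1−λ)·x') ≥ min(g(x), g(x')) for all x, x' : T → ℝ with x, x' ≥ 0 componentwise and all λ ∈ [0,1]. -/

import Mathlib

open Finset

/-- Load on edge `e` induced by the flow vector `x`: `Σ_{p ∈ T, e ∈ p} x p`. -/
noncomputable def edgeLoad {E T : Type*} [Fintype T] [DecidableEq E]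
    (tun : T → Finset E) (x : T → ℝ) (e : E) : ℝ :=
  ∑ p, if e ∈ tun p then x p else 0

/-- Normalization constant `γ(x) = max (max_{e ∈ E} load_e(x) / C e) 1`. -/
noncomputable def gamma {E T : Type*} [Fintype E] [Nonempty E] [Fintype T] [DecidableEq E]
    (C : E → ℝ) (tun : T → Finset E) (x : T → ℝ) : ℝ :=
  max (univ.sup' univ_nonempty (fun e => edgeLoad tun x e / C e)) 1

/-- Normalized pair flow `y_u(x) = (Σ_{p ∈ T, pair p = u} x p) / γ(x)`. -/
noncomputable def pairFlow {E T U : Type*} [Fintype E] [Nonempty E] [Fintype T]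
    [DecidableEq E] [DecidableEq U]
    (C : E → ℝ) (tun : T → Finset E) (pair : T → U) (x : T → ℝ) (u : U) : ℝ :=
  (∑ p, if pair p = u then x p else 0) / gamma C tun x

/-- Maximum-multicommodity-flow objective `f_MMCF(x, D) = Σ_{u ∈ U} min (D u) (y_u(x))`. -/
noncomputable def fMMCF {E T U : Type*} [Fintype E] [Nonempty E] [Fintype T] [Fintype U]
    [DecidableEq E] [DecidableEq U]
    (C : E → ℝ) (tun : T → Finset E) (pair : T → U) (D : U → ℝ) (x : T → ℝ) : ℝ :=
  ∑ u, min (D u) (pairFlow C tun pair x u)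

/-- Maximum-concurrent-flow objective: the minimum of the finite set
`{y_u(x) / D u : u ∈ U, D u > 0} ∪ {1}`. -/
noncomputable def fMCONC {E T U : Type*} [Fintype E] [Nonempty E] [Fintype T] [Fintype U]
    [DecidableEq E] [DecidableEq U]
    (C : E → ℝ) (tun : T → Finset E) (pair : T → U) (D : U → ℝ) (x : T → ℝ) : ℝ :=
  Finset.fold min 1 (fun u => pairFlow C tun pair x u / D u) (univ.filter fun u => 0 < D u)

/-!
Let `z = λ x + (1 - λ) x'` and `Γ = λ γ(x) + (1 - λ) γ(x')`. Since `γ` is convex, `γ(z) ≤ Γ`;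
since pair sums are linear and nonnegative, `y_u(z) ≥ a y_u(x) + b y_u(x')` with the weights
`a = λ γ(x) / Γ`, `b = (1 - λ) γ(x') / Γ`, which sum to `1`. Each `f_MCONC(·, D)` is a concave
nondecreasing function of the pair flows (a minimum of `1` and of positive multiples of them), so
`f_MCONC(z, D) ≥ a f_MCONC(x, D) + b f_MCONC(x', D)`. The weights do not depend on `D`, so the
inequality survives averaging over the demands, and a convex combination dominates the minimum.
-/
lemma Finset.sum_ite_mul_add_mul {T : Type*} [Fintype T] (q : T → Prop) [DecidablePred q]
    (a b : ℝ) (x x' : T → ℝ) :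
    (∑ p, if q p then a * x p + b * x' p else 0)
      = a * (∑ p, if q p then x p else 0) + b * (∑ p, if q p then x' p else 0) := by
  simp only [← sum_filter, sum_add_distrib, mul_sum]

lemma Finset.combo_le_fold_min {ι : Type*} (s : Finset ι) (c : ℝ) (f g h : ι → ℝ)
    {a b : ℝ} (ha : 0 ≤ a) (hb : 0 ≤ b) (hab : a + b = 1)
    (hfgh : ∀ i ∈ s, a * f i + b * g i ≤ h i) :
    a * s.fold min c f + b * s.fold min c g ≤ s.fold min c h := by
  refine (le_fold_min _).2 ⟨?_, fun i hi => ?_⟩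
  · calc a * s.fold min c f + b * s.fold min c g ≤ a * c + b * c := by
          gcongr <;> exact (fold_min_le _).2 (Or.inl le_rfl)
      _ = c := by rw [← add_mul, hab, one_mul]
  · calc a * s.fold min c f + b * s.fold min c g ≤ a * f i + b * g i := by
          gcongr <;> exact (fold_min_le _).2 (Or.inr ⟨i, hi, le_rfl⟩)
      _ ≤ h i := hfgh i hi

section Gamma

variable {E T : Type*} [Fintype E] [Nonempty E] [Fintype T] [DecidableEq E]
  (C : E → ℝ) (tun : T → Finset E)

lemma one_le_gamma (x : T → ℝ) : 1 ≤ gamma C tun x :=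
  le_max_right _ _

lemma gamma_pos (x : T → ℝ) : 0 < gamma C tun x :=
  zero_lt_one.trans_le (one_le_gamma C tun x)

lemma edgeLoad_div_le_gamma (x : T → ℝ) (e : E) : edgeLoad tun x e / C e ≤ gamma C tun x :=
  le_max_of_le_left (le_sup' (fun e => edgeLoad tun x e / C e) (mem_univ e))

lemma gamma_convex_comb_le (x x' : T → ℝ) {lam : ℝ} (hlam0 : 0 ≤ lam) (hlam1 : lam ≤ 1) :
    gamma C tun (fun p => lam * x p + (1 - lam) * x' p)
      ≤ lam * gamma C tun x + (1 - lam) * gamma C tun x' := by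
  have hlam1' : 0 ≤ 1 - lam := sub_nonneg.2 hlam1
  refine max_le (sup'_le _ _ fun e _ => ?_) ?_
  · rw [edgeLoad, sum_ite_mul_add_mul, add_div, mul_div_assoc, mul_div_assoc]
    gcongr
    exacts [edgeLoad_div_le_gamma C tun x e, edgeLoad_div_le_gamma C tun x' e]
  · calc (1 : ℝ) = lam * 1 + (1 - lam) * 1 := by ring
      _ ≤ _ := by gcongr <;> exact one_le_gamma C tun _

end Gamma

section Flows

variable {E T U : Type*} [Fintype E] [Nonempty E] [Fintype T]
  [DecidableEq E] [DecidableEq U] (C : E → ℝ) (tun : T → Finset E) (pair : T → U)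

lemma gammaWeighted_combo_le_pairFlow {x x' : T → ℝ} (hx : ∀ p, 0 ≤ x p)
    (hx' : ∀ p, 0 ≤ x' p) {lam : ℝ} (hlam0 : 0 ≤ lam) (hlam1 : lam ≤ 1) (u : U) :
    lam * gamma C tun x / (lam * gamma C tun x + (1 - lam) * gamma C tun x')
        * pairFlow C tun pair x u
      + (1 - lam) * gamma C tun x' / (lam * gamma C tun x + (1 - lam) * gamma C tun x')
        * pairFlow C tun pair x' u
      ≤ pairFlow C tun pair (fun p => lam * x p + (1 - lam) * x' p) u := by
  set z : T → ℝ := fun p => lam * x p + (1 - lam) * x' p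
  set Γ := lam * gamma C tun x + (1 - lam) * gamma C tun x'
  have hγz : gamma C tun z ≤ Γ := gamma_convex_comb_le C tun x x' hlam0 hlam1
  have hflow_nonneg : 0 ≤ ∑ p, if pair p = u then z p else 0 :=
    sum_nonneg fun p _ => by
      split_ifs
      · exact add_nonneg (mul_nonneg hlam0 (hx p)) (mul_nonneg (sub_nonneg.2 hlam1) (hx' p))
      · exact le_rfl
  have hcombo : lam * gamma C tun x / Γ * pairFlow C tun pair x u
      + (1 - lam) * gamma C tun x' / Γ * pairFlow C tun pair x' u
      = (∑ p, if pair p = u then z p else 0) / Γ := by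
    have := gamma_pos C tun x
    have := gamma_pos C tun x'
    rw [sum_ite_mul_add_mul, pairFlow, pairFlow]
    field_simp
  rw [hcombo, pairFlow]
  exact div_le_div_of_nonneg_left hflow_nonneg (gamma_pos C tun z) hγz

lemma combo_le_fMCONC [Fintype U] (D : U → ℝ) {a b : ℝ} (ha : 0 ≤ a) (hb : 0 ≤ b)
    (hab : a + b = 1) {x x' z : T → ℝ}
    (hflow : ∀ u, a * pairFlow C tun pair x u + b * pairFlow C tun pair x' u
      ≤ pairFlow C tun pair z u) :
    a * fMCONC C tun pair D x + b * fMCONC C tun pair D x' ≤ fMCONC C tun pair D z :=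
  combo_le_fold_min _ _ _ _ _ ha hb hab fun u hu =>
    calc a * (pairFlow C tun pair x u / D u) + b * (pairFlow C tun pair x' u / D u)
        = (a * pairFlow C tun pair x u + b * pairFlow C tun pair x' u) / D u := by ring
      _ ≤ pairFlow C tun pair z u / D u :=
        div_le_div_of_nonneg_right (hflow u) (mem_filter.1 hu).2.le

end Flows

theorem avg_fMCONC_quasiconcave_general {E T U : Type*} [Fintype E] [Nonempty E] [Fintype T] [Fintype U]
    [DecidableEq E] [DecidableEq U]
    (C : E → ℝ) (tun : T → Finset E)
    (pair : T → U)
    (M : ℕ) (D : Fin M → U → ℝ)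
    (x x' : T → ℝ) (hx : ∀ p, 0 ≤ x p) (hx' : ∀ p, 0 ≤ x' p)
    (lam : ℝ) (hlam0 : 0 ≤ lam) (hlam1 : lam ≤ 1) :
    min ((M : ℝ)⁻¹ * ∑ i, fMCONC C tun pair (D i) x)
        ((M : ℝ)⁻¹ * ∑ i, fMCONC C tun pair (D i) x')
      ≤ (M : ℝ)⁻¹ * ∑ i, fMCONC C tun pair (D i) (fun p => lam * x p + (1 - lam) * x' p) := by
  set Γ := lam * gamma C tun x + (1 - lam) * gamma C tun x'
  have hΓ : 0 < Γ := (gamma_pos C tun _).trans_le (gamma_convex_comb_le C tun x x' hlam0 hlam1)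
  set a := lam * gamma C tun x / Γ
  set b := (1 - lam) * gamma C tun x' / Γ
  have ha : 0 ≤ a := div_nonneg (mul_nonneg hlam0 (gamma_pos C tun x).le) hΓ.le
  have hb : 0 ≤ b := div_nonneg (mul_nonneg (sub_nonneg.2 hlam1) (gamma_pos C tun x').le) hΓ.le
  have hab : a + b = 1 := by rw [← add_div, div_self hΓ.ne']
  have hcombo : ∀ i, a * fMCONC C tun pair (D i) x + b * fMCONC C tun pair (D i) x'
      ≤ fMCONC C tun pair (D i) (fun p => lam * x p + (1 - lam) * x' p) := fun i =>
    combo_le_fMCONC C tun pair (D i) ha hb hab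
      (gammaWeighted_combo_le_pairFlow C tun pair hx hx' hlam0 hlam1)
  calc _ ≤ a * ((M : ℝ)⁻¹ * ∑ i, fMCONC C tun pair (D i) x)
        + b * ((M : ℝ)⁻¹ * ∑ i, fMCONC C tun pair (D i) x') :=
        Convex.min_le_combo _ _ ha hb hab
    _ = (M : ℝ)⁻¹ * ∑ i, (a * fMCONC C tun pair (D i) x
          + b * fMCONC C tun pair (D i) x') := by
        rw [sum_add_distrib, ← mul_sum, ← mul_sum]; ring
    _ ≤ _ := by gcongr with i; exact hcombo i

/-- The average of maximum-concurrent-flow objectives over any finite set of nonnegative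
demand matrices is quasi-concave in the flow vector. -/
theorem avg_fMCONC_quasiconcave {E T U : Type*} [Fintype E] [Nonempty E] [Fintype T] [Fintype U]
    [DecidableEq E] [DecidableEq U]
    (C : E → ℝ) (hC : ∀ e, 0 < C e) (tun : T → Finset E) (htun : ∀ p, (tun p).Nonempty)
    (pair : T → U)
    (M : ℕ) (hM : 1 ≤ M) (D : Fin M → U → ℝ) (hD : ∀ i u, 0 ≤ D i u)
    (x x' : T → ℝ) (hx : ∀ p, 0 ≤ x p) (hx' : ∀ p, 0 ≤ x' p)
    (lam : ℝ) (hlam0 : 0 ≤ lam) (hlam1 : lam ≤ 1) :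
    min ((M : ℝ)⁻¹ * ∑ i, fMCONC C tun pair (D i) x)
        ((M : ℝ)⁻¹ * ∑ i, fMCONC C tun pair (D i) x')
      ≤ (M : ℝ)⁻¹ * ∑ i, fMCONC C tun pair (D i) (fun p => lam * x p + (1 - lam) * x' p) :=
  avg_fMCONC_quasiconcave_general C tun pair M D x x' hx hx' lam hlam0 hlam1
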